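/- For every m-partition λ of length n, the representation V_λ of H(m,1,n) is irreducible. -/

import Mathlib

/-- Generators of the cyclotomic Hecke algebra `H(m,1,n)`:
`tau` and `sig i` (representing `σ_{i+1}`) for `i : Fin (n-1)`. -/
inductive CycGen (n : ℕ) : Type
  | tau : CycGen n
  | sig : Fin (n - 1) → CycGen n

/-- The defining relations of the cyclotomic Hecke algebra `H(m,1,n)` with
parameters `q`, `qinv` (playing the role of `q⁻¹`) and `v : Fin m → R`. -/
inductive cycRel (R : Type) [CommRing R] (m n : ℕ) (q qinv : R) (v : Fin m → R) :
    FreeAlgebra R (CycGen n) → FreeAlgebra R (CycGen n) → Prop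
  | braid (i j : Fin (n - 1)) (h : (j : ℕ) = (i : ℕ) + 1) :
      cycRel R m n q qinv v
        (FreeAlgebra.ι R (CycGen.sig i) * FreeAlgebra.ι R (CycGen.sig j) *
          FreeAlgebra.ι R (CycGen.sig i))
        (FreeAlgebra.ι R (CycGen.sig j) * FreeAlgebra.ι R (CycGen.sig i) *
          FreeAlgebra.ι R (CycGen.sig j))
  | comm (i j : Fin (n - 1)) (h : (i : ℕ) + 1 < (j : ℕ)) :
      cycRel R m n q qinv v
        (FreeAlgebra.ι R (CycGen.sig i) * FreeAlgebra.ι R (CycGen.sig j))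
        (FreeAlgebra.ι R (CycGen.sig j) * FreeAlgebra.ι R (CycGen.sig i))
  | tauSigma (i : Fin (n - 1)) (h : (i : ℕ) = 0) :
      cycRel R m n q qinv v
        (FreeAlgebra.ι R CycGen.tau * FreeAlgebra.ι R (CycGen.sig i) *
          FreeAlgebra.ι R CycGen.tau * FreeAlgebra.ι R (CycGen.sig i))
        (FreeAlgebra.ι R (CycGen.sig i) * FreeAlgebra.ι R CycGen.tau *
          FreeAlgebra.ι R (CycGen.sig i) * FreeAlgebra.ι R CycGen.tau)
  | tauComm (i : Fin (n - 1)) (h : 0 < (i : ℕ)) :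
      cycRel R m n q qinv v
        (FreeAlgebra.ι R CycGen.tau * FreeAlgebra.ι R (CycGen.sig i))
        (FreeAlgebra.ι R (CycGen.sig i) * FreeAlgebra.ι R CycGen.tau)
  | quadratic (i : Fin (n - 1)) :
      cycRel R m n q qinv v
        (FreeAlgebra.ι R (CycGen.sig i) * FreeAlgebra.ι R (CycGen.sig i))
        ((q - qinv) • FreeAlgebra.ι R (CycGen.sig i) + 1)
  | cyclotomic :
      cycRel R m n q qinv v
        ((List.ofFn (fun k : Fin m =>
            FreeAlgebra.ι R CycGen.tau - algebraMap R (FreeAlgebra R (CycGen n)) (v k))).prod)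
        0

/-- The cyclotomic Hecke algebra `H(m,1,n)`. -/
abbrev CycHecke (R : Type) [CommRing R] (m n : ℕ) (q qinv : R) (v : Fin m → R) : Type :=
  RingQuot (cycRel R m n q qinv v)

variable (R : Type) [CommRing R] (m n : ℕ) (q qinv : R) (v : Fin m → R)

/-- The generator `τ` of `H(m,1,n)`. -/
noncomputable def tauH : CycHecke R m n q qinv v :=
  RingQuot.mkAlgHom R (cycRel R m n q qinv v) (FreeAlgebra.ι R CycGen.tau)

/-- The generator `σ_{i+1}` of `H(m,1,n)`, for `i : Fin (n-1)`. -/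
noncomputable def sigH (i : Fin (n - 1)) : CycHecke R m n q qinv v :=
  RingQuot.mkAlgHom R (cycRel R m n q qinv v) (FreeAlgebra.ι R (CycGen.sig i))

/-- The generator `σ_{k+1}` of `H(m,1,n)`, for `k : ℕ` (defined as `1` out of range). -/
noncomputable def sigN (k : ℕ) : CycHecke R m n q qinv v :=
  if h : k < n - 1 then sigH R m n q qinv v ⟨k, h⟩ else 1

/-- The inverse `σ_{k+1}⁻¹ = σ_{k+1} - (q - q⁻¹)` of the generator `σ_{k+1}`. -/
noncomputable def sigInvN (k : ℕ) : CycHecke R m n q qinv v :=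
  sigN R m n q qinv v k - algebraMap R (CycHecke R m n q qinv v) (q - qinv)

/-- `leftW j = σ_j⁻¹ σ_{j-1}⁻¹ ⋯ σ_1⁻¹` (with `leftW 0 = 1`). -/
noncomputable def leftW : ℕ → CycHecke R m n q qinv v
  | 0 => 1
  | j + 1 => sigInvN R m n q qinv v j * leftW j

/-- `rW k = σ_1 σ_2 ⋯ σ_k` (with `rW 0 = 1`). -/
noncomputable def rW : ℕ → CycHecke R m n q qinv v
  | 0 => 1
  | k + 1 => rW k * sigN R m n q qinv v k

/-- The Jucys–Murphy elements: `JM k` is the element `J_{k+1}` of the paper, so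
`JM 0 = τ` and `JM (k+1) = σ_{k+1} (JM k) σ_{k+1}`. -/
noncomputable def JM : ℕ → CycHecke R m n q qinv v
  | 0 => tauH R m n q qinv v
  | k + 1 => sigN R m n q qinv v k * JM k * sigN R m n q qinv v k
/-- The semisimplicity conditions (together with `q ≠ 0`, `v k ≠ 0`) on the
parameters: `1 + q² + ⋯ + q^{2N} ≠ 0` for `0 < N < n`, and `q^{2i} v_j ≠ v_k`
for `j ≠ k` and `-n < i < n`. -/
def SSParams (m n : ℕ) (q : ℂ) (v : Fin m → ℂ) : Prop :=
  (∀ N : ℕ, 0 < N → N < n → ∑ k ∈ Finset.range (N + 1), q ^ (2 * k) ≠ 0) ∧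
  (∀ j k : Fin m, j ≠ k → ∀ i : ℤ, -(n : ℤ) < i → i < (n : ℤ) → q ^ (2 * i) * v j ≠ v k)

/-- A subspace `W` is invariant under an endomorphism `f`. -/
def Invt {V : Type} [AddCommGroup V] [Module ℂ V] (f : Module.End ℂ V)
    (W : Submodule ℂ V) : Prop :=
  ∀ x ∈ W, f x ∈ W

/-- A `C`-representation of `H(m,1,n)`: the Jucys–Murphy elements `J_1,…,J_n`
act by diagonalizable operators, and for every `i = 1,…,n-1` the representation
space is completely reducible over the subalgebra generated by `J_i, J_{i+1}, σ_i`
(every invariant subspace has an invariant complement). -/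
def IsCRep (m n : ℕ) (q : ℂ) (v : Fin m → ℂ) {V : Type} [AddCommGroup V] [Module ℂ V]
    (ρ : CycHecke ℂ m n q q⁻¹ v →ₐ[ℂ] Module.End ℂ V) : Prop :=
  (∀ i < n, ⨆ μ : ℂ, (ρ (JM ℂ m n q q⁻¹ v i)).eigenspace μ = ⊤) ∧
  ∀ i : ℕ, i + 1 < n → ∀ W : Submodule ℂ V,
    Invt (ρ (JM ℂ m n q q⁻¹ v i)) W → Invt (ρ (JM ℂ m n q q⁻¹ v (i + 1))) W →
    Invt (ρ (sigN ℂ m n q q⁻¹ v i)) W →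
    ∃ W' : Submodule ℂ V, IsCompl W W' ∧ Invt (ρ (JM ℂ m n q q⁻¹ v i)) W' ∧
      Invt (ρ (JM ℂ m n q q⁻¹ v (i + 1))) W' ∧ Invt (ρ (sigN ℂ m n q q⁻¹ v i)) W'
/-- A standard Young `m`-tableau with `n` nodes, encoded as the map sending the
entry `i` (0-based: `i` stands for the number `i+1`) to its node `(k, r, s)`
(diagram `k`, row `r`, column `s`, all 0-based). The conditions: the filling is
injective, and for each node all nodes to its left in its row and all nodes
above it in its column are occupied by smaller entries. This holds if and only
if the occupied nodes form an `m`-tuple of Young diagrams of total size `n` and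
the entries increase along the rows and columns of every diagram. -/
def IsStdTab (m n : ℕ) (T : Fin n → Fin m × ℕ × ℕ) : Prop :=
  Function.Injective T ∧
  ∀ i : Fin n,
    (∀ s' < (T i).2.2, ∃ j : Fin n, j < i ∧ T j = ((T i).1, (T i).2.1, s')) ∧
    (∀ r' < (T i).2.1, ∃ j : Fin n, j < i ∧ T j = ((T i).1, r', (T i).2.2))

/-- The content `c(T|i) = v_k q^{2(s-r)}` of the node of `T` containing the
entry `i` (in row `r` and column `s` of the `k`-th diagram). -/
noncomputable def tabContent (m n : ℕ) (q : ℂ) (v : Fin m → ℂ)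
    (T : Fin n → Fin m × ℕ × ℕ) (i : Fin n) : ℂ :=
  v (T i).1 * q ^ (2 * (((T i).2.2 : ℤ) - ((T i).2.1 : ℤ)))
/-- The type of standard `m`-tableaux of shape `S` (where the shape is recorded
as the set `S` of occupied nodes). -/
def Tab (m n : ℕ) (S : Set (Fin m × ℕ × ℕ)) : Type :=
  {T : Fin n → Fin m × ℕ × ℕ // IsStdTab m n T ∧ Set.range T = S}

open Classical in
/-- A representation of `H(m,1,n)` on the vector space `V_λ` with basis the
standard `m`-tableaux of shape `S` is given by the formulas of the paper:
`τ · X = c(X|1) X` and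
`σ_i · X = -(q-q⁻¹) c(X|i+1)/(c(X|i) - c(X|i+1)) X
          + (q c(X|i+1) - q⁻¹ c(X|i))/(c(X|i+1) - c(X|i)) X s_i`,
where `X s_i` is `X` with the entries `i` and `i+1` exchanged, interpreted as
`0` if it is not standard. -/
def IsTabRep (m n : ℕ) (q : ℂ) (v : Fin m → ℂ) (S : Set (Fin m × ℕ × ℕ))
    (ρ : CycHecke ℂ m n q q⁻¹ v →ₐ[ℂ] Module.End ℂ (Tab m n S →₀ ℂ)) : Prop :=
  (∀ (T : Tab m n S) (h0 : 0 < n),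
    ρ (tauH ℂ m n q q⁻¹ v) (Finsupp.single T 1) =
      tabContent m n q v T.1 ⟨0, h0⟩ • Finsupp.single T 1) ∧
  (∀ (T : Tab m n S) (i : ℕ) (h : i + 1 < n),
    ρ (sigN ℂ m n q q⁻¹ v i) (Finsupp.single T 1) =
      (-((q - q⁻¹) * tabContent m n q v T.1 ⟨i + 1, h⟩ /
          (tabContent m n q v T.1 ⟨i, by omega⟩ - tabContent m n q v T.1 ⟨i + 1, h⟩))) •
        Finsupp.single T 1 +
      ((q * tabContent m n q v T.1 ⟨i + 1, h⟩ - q⁻¹ * tabContent m n q v T.1 ⟨i, by omega⟩) /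
          (tabContent m n q v T.1 ⟨i + 1, h⟩ - tabContent m n q v T.1 ⟨i, by omega⟩)) •
        (if hstd : IsStdTab m n (T.1 ∘ Equiv.swap ⟨i, by omega⟩ ⟨i + 1, h⟩)
         then Finsupp.single
            (⟨T.1 ∘ Equiv.swap ⟨i, by omega⟩ ⟨i + 1, h⟩, hstd, by
              rw [Set.range_comp, Equiv.range_eq_univ, Set.image_univ]
              exact T.2.2⟩ : Tab m n S) 1
         else 0))

/-!
The Jucys–Murphy elements `J_1, …, J_n` act diagonally on the tableau basis, `J_i` with
eigenvalue `c(X|i)`, and the semisimplicity conditions make the content vector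
`(c(X|1), …, c(X|n))` determine the tableau `X`. Hence a nonzero invariant subspace contains a
basis vector `X`, and with it every `X s_i` that is standard, whose coefficient in `σ_i · X` is
again nonzero by semisimplicity. Any two standard tableaux of one shape are linked by such swaps:
swapping a descent for a total order of the nodes refining the order of each diagram keeps the
tableau standard and lowers a weight, until the unique sorted tableau is reached.

The case `q² = 1`, which the semisimplicity conditions allow, is excluded by the representation
itself as soon as a diagram has two nodes, because the formulas force `c(X|i) ≠ c(X|i+1)`.
-/

theorem Submodule.exists_single_one_mem_of_diagonal {ι J K : Type*} [Field K]
    {W : Submodule K (ι →₀ K)} (hW0 : W ≠ ⊥) (f : J → Module.End K (ι →₀ K)) (c : J → ι → K)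
    (hf : ∀ j x a, f j x a = c j a * x a) (hW : ∀ j, ∀ x ∈ W, f j x ∈ W)
    (hc : ∀ a b, a ≠ b → ∃ j, c j a ≠ c j b) : ∃ a, Finsupp.single a 1 ∈ W := by
  classical
  obtain ⟨x, hxW, hx0⟩ := W.ne_bot_iff.1 hW0
  induction hN : x.support.card using Nat.strong_induction_on generalizing x with
  | _ N ih =>
  obtain ⟨a, ha⟩ := Finsupp.support_nonempty_iff.2 hx0
  by_cases hsingle : ∀ b ∈ x.support, b = a
  · have hx : x = Finsupp.single a (x a) :=
      (Finsupp.support_eq_singleton.1 (Finset.eq_singleton_iff_unique_mem.2 ⟨ha, hsingle⟩)).2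
    refine ⟨a, (W.smul_mem_iff (Finsupp.mem_support_iff.1 ha)).1 ?_⟩
    rwa [Finsupp.smul_single, smul_eq_mul, mul_one, ← hx]
  obtain ⟨b, hb, hba⟩ := not_forall₂.1 hsingle
  obtain ⟨j, hj⟩ := hc a b (Ne.symm hba)
  set y := f j x - c j b • x
  have hy : ∀ d, y d = (c j d - c j b) * x d := fun d => by simp [y, hf, sub_mul]
  have hsub : y.support ⊆ x.support.erase b := fun d hd => by
    simp only [Finsupp.mem_support_iff, Finset.mem_erase, hy, ne_eq, mul_eq_zero, sub_eq_zero,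
      not_or] at hd ⊢
    exact ⟨fun h => hd.1 (h ▸ rfl), hd.2⟩
  refine ih _ ?_ y (sub_mem (hW j x hxW) (W.smul_mem _ hxW)) (fun h0 => ?_) rfl
  · exact hN ▸ (Finset.card_le_card hsub).trans_lt (Finset.card_erase_lt_of_mem hb)
  · have := hy a
    rw [h0, Finsupp.zero_apply] at this
    exact mul_ne_zero (sub_ne_zero.2 hj) (Finsupp.mem_support_iff.1 ha) this.symm

theorem Fin.swap_lt_swap {n : ℕ} {i i1 a b : Fin n} (hi : (i1 : ℕ) = i + 1) (hab : a < b)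
    (hne : ¬(a = i ∧ b = i1)) : Equiv.swap i i1 a < Equiv.swap i i1 b := by
  rw [Fin.lt_def] at hab ⊢
  simp only [Fin.ext_iff] at hne
  simp only [Equiv.swap_apply_def]
  split_ifs <;> simp only [Fin.ext_iff] at * <;> omega

theorem Fin.strictMono_of_lt_add_one {n : ℕ} {α : Type*} [Preorder α] {f : Fin n → α}
    (hf : ∀ (i : ℕ) (h : i + 1 < n), f ⟨i, by omega⟩ < f ⟨i + 1, h⟩) : StrictMono f := by
  cases n with
  | zero => exact fun a => a.elim0
  | succ n => exact Fin.strictMono_iff_lt_succ.2 fun i => hf i (by omega)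

theorem Nat.pair_le_pair {a a' b b' : ℕ} (ha : a ≤ a') (hb : b ≤ b') :
    Nat.pair a b ≤ Nat.pair a' b' :=
  (StrictMono.monotone (fun _ _ h => Nat.pair_lt_pair_left b h) ha).trans
    (StrictMono.monotone (fun _ _ h => Nat.pair_lt_pair_right a' h) hb)

def nodeDiag {m : ℕ} (x : Fin m × ℕ × ℕ) : ℤ := (x.2.2 : ℤ) - x.2.1

namespace IsStdTab

variable {m n : ℕ} {T : Fin n → Fin m × ℕ × ℕ}

theorem exists_le_of_col_le (hT : IsStdTab m n T) (i : Fin n) {s : ℕ} (hs : s ≤ (T i).2.2) :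
    ∃ j ≤ i, T j = ((T i).1, (T i).2.1, s) := by
  rcases hs.lt_or_eq with hs | rfl
  · obtain ⟨j, hj, hTj⟩ := (hT.2 i).1 s hs
    exact ⟨j, hj.le, hTj⟩
  · exact ⟨i, le_rfl, rfl⟩

theorem exists_le_of_row_le (hT : IsStdTab m n T) (i : Fin n) {r : ℕ} (hr : r ≤ (T i).2.1) :
    ∃ j ≤ i, T j = ((T i).1, r, (T i).2.2) := by
  rcases hr.lt_or_eq with hr | rfl
  · obtain ⟨j, hj, hTj⟩ := (hT.2 i).2 r hr
    exact ⟨j, hj.le, hTj⟩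
  · exact ⟨i, le_rfl, rfl⟩

theorem le_of_snd_le (hT : IsStdTab m n T) {i j : Fin n} (hk : (T j).1 = (T i).1)
    (hle : (T j).2 ≤ (T i).2) : j ≤ i := by
  obtain ⟨l, hli, hTl⟩ := hT.exists_le_of_row_le i hle.1
  obtain ⟨j', hj'l, hTj'⟩ := hT.exists_le_of_col_le l (s := (T j).2.2) (by rw [hTl]; exact hle.2)
  have hj' : j' = j := hT.1 (by rw [hTj', hTl, ← hk])
  exact hj' ▸ hj'l.trans hli

theorem lt_of_snd_le (hT : IsStdTab m n T) {i j : Fin n} (hk : (T j).1 = (T i).1)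
    (hle : (T j).2 ≤ (T i).2) (hne : j ≠ i) : j < i :=
  (hT.le_of_snd_le hk hle).lt_of_ne hne

theorem comp_swap_iff (hT : IsStdTab m n T) {i i1 : Fin n} (hi : (i1 : ℕ) = i + 1) :
    IsStdTab m n (T ∘ Equiv.swap i i1) ↔ ¬((T i).1 = (T i1).1 ∧ (T i).2 ≤ (T i1).2) := by
  have hne : i ≠ i1 := fun h => by rw [h] at hi; omega
  constructor
  · rintro hT' ⟨hk, hle⟩
    have := hT'.le_of_snd_le (i := i) (j := i1) (by simpa using hk) (by simpa using hle)
    rw [Fin.le_def] at this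
    omega
  · intro hcomp
    have key : ∀ l j, j < Equiv.swap i i1 l → T j ≠ T i ∨ l ≠ i → Equiv.swap i i1 j < l := by
      intro l j hj h
      simpa using Fin.swap_lt_swap hi hj (by rintro ⟨rfl, hl⟩; simp_all [Equiv.swap_apply_eq_iff])
    refine ⟨hT.1.comp (Equiv.swap i i1).injective, fun l => ⟨fun s hs => ?_, fun r hr => ?_⟩⟩
    · obtain ⟨j, hj, hTj⟩ := (hT.2 (Equiv.swap i i1 l)).1 s hs
      refine ⟨Equiv.swap i i1 j, key l j hj ?_, by simpa using hTj⟩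
      by_contra! h
      obtain ⟨hji, rfl⟩ := h
      simp only [Function.comp_apply, Equiv.swap_apply_left] at hTj hs
      exact hcomp ⟨by rw [← hji, hTj], by rw [← hji, hTj]; exact ⟨le_rfl, hs.le⟩⟩
    · obtain ⟨j, hj, hTj⟩ := (hT.2 (Equiv.swap i i1 l)).2 r hr
      refine ⟨Equiv.swap i i1 j, key l j hj ?_, by simpa using hTj⟩
      by_contra! h
      obtain ⟨hji, rfl⟩ := h
      simp only [Function.comp_apply, Equiv.swap_apply_left] at hTj hr
      exact hcomp ⟨by rw [← hji, hTj], by rw [← hji, hTj]; exact ⟨hr.le, le_rfl⟩⟩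

theorem eq_right_or_below_of_le (hT : IsStdTab m n T) {i i1 : Fin n} (hi : (i1 : ℕ) = i + 1)
    (hk : (T i).1 = (T i1).1) (hle : (T i).2 ≤ (T i1).2) :
    T i1 = ((T i).1, (T i).2.1, (T i).2.2 + 1) ∨ T i1 = ((T i).1, (T i).2.1 + 1, (T i).2.2) := by
  have between : ∀ j, T j = ((T i1).1, (T j).2) → (T i).2 ≤ (T j).2 → (T j).2 ≤ (T i1).2 →
      T j ≠ T i1 → T j = T i := by
    intro j hj hij hji1 hne
    have h1 := hT.le_of_snd_le (i := j) (by rw [hj, hk]) hij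
    have h2 := hT.lt_of_snd_le (by rw [hj]) hji1 (fun h => hne (h ▸ rfl))
    rw [Fin.le_def] at h1
    rw [Fin.lt_def] at h2
    rw [Fin.ext (by omega : (j : ℕ) = i)]
  have hne : T i ≠ T i1 := fun h => by have := hT.1 h; rw [this] at hi; omega
  obtain ⟨hr, hs⟩ := hle
  rcases hr.lt_or_eq with hr | hr
  · obtain ⟨j, -, hTj⟩ := hT.exists_le_of_row_le i1 (r := (T i1).2.1 - 1) (by omega)
    have h := between j (by rw [hTj]) (by rw [hTj]; exact ⟨by dsimp; omega, hs⟩)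
      (by rw [hTj]; exact ⟨by dsimp; omega, le_rfl⟩) (by rw [hTj]; simp [Prod.ext_iff]; omega)
    rw [hTj] at h
    right
    rw [← h]
    ext <;> simp
    omega
  · have hs : (T i).2.2 < (T i1).2.2 := hs.lt_of_ne fun h => hne (Prod.ext hk (Prod.ext hr h))
    obtain ⟨j, -, hTj⟩ := hT.exists_le_of_col_le i1 (s := (T i1).2.2 - 1) (by omega)
    have h := between j (by rw [hTj]) (by rw [hTj]; exact ⟨hr.le, by dsimp; omega⟩)
      (by rw [hTj]; exact ⟨le_rfl, by dsimp; omega⟩) (by rw [hTj]; simp [Prod.ext_iff]; omega)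
    rw [hTj] at h
    left
    rw [← h]
    ext <;> simp
    omega

theorem diag_succ_ne (hT : IsStdTab m n T) {i i1 : Fin n} (hi : (i1 : ℕ) = i + 1)
    (hT' : IsStdTab m n (T ∘ Equiv.swap i i1)) (hk : (T i).1 = (T i1).1) :
    nodeDiag (T i1) + 1 ≠ nodeDiag (T i) := by
  intro hdiag
  simp only [nodeDiag] at hdiag
  rcases lt_or_ge (T i).2.1 (T i1).2.1 with hr | hr
  · exact (hT.comp_swap_iff hi).1 hT' ⟨hk, hr.le, by omega⟩
  · have := hT.le_of_snd_le hk.symm ⟨hr, by omega⟩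
    rw [Fin.le_def] at this
    omega

/-- The row of `a` up to `a` and the column of `b` up to `b` are occupied, and they share at most
one node, none if they lie in different diagrams. -/
theorem col_add_row_lt (hT : IsStdTab m n T) {a b : Fin m × ℕ × ℕ} (ha : a ∈ Set.range T)
    (hb : b ∈ Set.range T) : a.2.2 + b.2.1 + (if a.1 = b.1 then 0 else 1) < n := by
  classical
  set R := (Finset.range (a.2.2 + 1)).image fun s => (a.1, a.2.1, s)
  set C := (Finset.range (b.2.1 + 1)).image fun r => (b.1, r, b.2.2)
  have hR : R.card = a.2.2 + 1 := by
    rw [Finset.card_image_of_injective _ fun x y => by simp, Finset.card_range]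
  have hC : C.card = b.2.1 + 1 := by
    rw [Finset.card_image_of_injective _ fun x y => by simp, Finset.card_range]
  have hRC : R ∪ C ⊆ Finset.univ.image T := by
    obtain ⟨ia, rfl⟩ := ha
    obtain ⟨ib, rfl⟩ := hb
    intro x hx
    simp only [R, C, Finset.mem_union, Finset.mem_image, Finset.mem_range, Nat.lt_succ_iff] at hx
    rcases hx with ⟨s, hs, rfl⟩ | ⟨r, hr, rfl⟩
    · obtain ⟨j, -, hj⟩ := hT.exists_le_of_col_le ia hs
      exact Finset.mem_image.2 ⟨j, Finset.mem_univ _, hj⟩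
    · obtain ⟨j, -, hj⟩ := hT.exists_le_of_row_le ib hr
      exact Finset.mem_image.2 ⟨j, Finset.mem_univ _, hj⟩
  have hRC_inter : R ∩ C ⊆ if a.1 = b.1 then {(a.1, a.2.1, b.2.2)} else ∅ := by
    intro x hx
    simp only [R, C, Finset.mem_inter, Finset.mem_image] at hx
    obtain ⟨⟨s, -, rfl⟩, r, -, h⟩ := hx
    simp only [Prod.ext_iff] at h
    simp [h.1, ← h.2.2]
  have h1 := Finset.card_union_add_card_inter R C
  have h2 := (Finset.card_le_card hRC).trans Finset.card_image_le
  have h3 := Finset.card_le_card hRC_inter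
  rw [Finset.card_univ, Fintype.card_fin] at h2
  split_ifs at h3 ⊢ <;> simp only [Finset.card_singleton, Finset.card_empty] at h3 <;> omega

theorem apply_eq_of_nodeDiag_eq (hT : IsStdTab m n T) {U : Fin n → Fin m × ℕ × ℕ}
    (hU : IsStdTab m n U) {i : Fin n} (hlt : ∀ j < i, T j = U j) (hk : (T i).1 = (U i).1)
    (hd : nodeDiag (T i) = nodeDiag (U i)) : T i = U i := by
  wlog hr : (T i).2.1 ≤ (U i).2.1 generalizing T U
  · exact (this hU hT (fun j hj => (hlt j hj).symm) hk.symm hd.symm (le_of_not_ge hr)).symm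
  simp only [nodeDiag] at hd
  obtain ⟨j, hji, hUj⟩ := hU.exists_le_of_row_le i hr
  rcases hji.lt_or_eq with hji | rfl
  · have := hT.le_of_snd_le (i := j) (j := i) (by rw [hlt j hji, hUj, hk])
      (by rw [hlt j hji, hUj]; exact ⟨le_rfl, by dsimp; omega⟩)
    exact absurd hji this.not_gt
  · have hr' : (U j).2.1 = (T j).2.1 := by rw [hUj]
    exact Prod.ext hk (Prod.ext hr'.symm (by omega))

end IsStdTab

def nodeKey {m : ℕ} (x : Fin m × ℕ × ℕ) : ℕ :=
  Nat.pair (Nat.pair x.2.1 x.2.2) x.1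

theorem nodeKey_injective {m : ℕ} : Function.Injective (nodeKey (m := m)) := by
  intro x y h
  simp only [nodeKey, Nat.pair_eq_pair] at h
  exact Prod.ext (Fin.ext h.2) (Prod.ext h.1.1 h.1.2)

theorem nodeKey_le_nodeKey {m : ℕ} {x y : Fin m × ℕ × ℕ} (hk : x.1 = y.1) (hle : x.2 ≤ y.2) :
    nodeKey x ≤ nodeKey y :=
  Nat.pair_le_pair (Nat.pair_le_pair hle.1 hle.2) (hk ▸ le_rfl)

def tabWeight {m n : ℕ} (T : Fin n → Fin m × ℕ × ℕ) : ℕ :=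
  ∑ j : Fin n, nodeKey (T j) * (n - j)

theorem tabWeight_comp_swap {m n : ℕ} (T : Fin n → Fin m × ℕ × ℕ) {i i1 : Fin n}
    (hi : (i1 : ℕ) = i + 1) :
    tabWeight (T ∘ Equiv.swap i i1) + nodeKey (T i) = tabWeight T + nodeKey (T i1) := by
  classical
  have hne : i ≠ i1 := fun h => by rw [h] at hi; omega
  have split (f : Fin n → ℕ) :
      ∑ j, f j = f i + f i1 + ∑ j ∈ (Finset.univ.erase i).erase i1, f j := by
    rw [← Finset.add_sum_erase _ _ (Finset.mem_univ i), ← Finset.add_sum_erase _ _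
      (Finset.mem_erase.2 ⟨hne.symm, Finset.mem_univ i1⟩), add_assoc]
  have hswap : tabWeight (T ∘ Equiv.swap i i1) =
      ∑ j, nodeKey (T j) * (n - Equiv.swap i i1 j) := by
    rw [← Equiv.sum_comp (Equiv.swap i i1)]
    simp [tabWeight]
  rw [hswap, tabWeight, split, split, Finset.sum_congr rfl fun j hj => by
    rw [Equiv.swap_apply_of_ne_of_ne (Finset.ne_of_mem_erase (Finset.mem_of_mem_erase hj))
      (Finset.ne_of_mem_erase hj)]]
  rw [Equiv.swap_apply_left, Equiv.swap_apply_right,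
    show n - (i : ℕ) = n - i1 + 1 by have := i1.isLt; omega]
  ring

namespace Tab

variable {m n : ℕ} {S : Set (Fin m × ℕ × ℕ)}

theorem apply_mem (T : Tab m n S) (i : Fin n) : T.1 i ∈ S :=
  T.2.2.subset ⟨i, rfl⟩

theorem range_eq (T U : Tab m n S) : Set.range T.1 = Set.range U.1 :=
  T.2.2.trans U.2.2.symm

/-- The paper's `X s_{i+1}`: entries of `Tab` are numbered from `0`. -/
def swap (T : Tab m n S) {i : ℕ} (h : i + 1 < n)
    (hstd : IsStdTab m n (T.1 ∘ Equiv.swap ⟨i, by omega⟩ ⟨i + 1, h⟩)) : Tab m n S :=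
  ⟨T.1 ∘ Equiv.swap ⟨i, by omega⟩ ⟨i + 1, h⟩, hstd, by
    rw [Set.range_comp, Equiv.range_eq_univ, Set.image_univ]
    exact T.2.2⟩

theorem tabContent_swap_left (T : Tab m n S) {i : ℕ} (h : i + 1 < n)
    (hstd : IsStdTab m n (T.1 ∘ Equiv.swap ⟨i, by omega⟩ ⟨i + 1, h⟩)) (q : ℂ) (v : Fin m → ℂ) :
    tabContent m n q v (T.swap h hstd).1 ⟨i, by omega⟩ = tabContent m n q v T.1 ⟨i + 1, h⟩ := by
  simp [swap, tabContent]

theorem tabContent_swap_right (T : Tab m n S) {i : ℕ} (h : i + 1 < n)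
    (hstd : IsStdTab m n (T.1 ∘ Equiv.swap ⟨i, by omega⟩ ⟨i + 1, h⟩)) (q : ℂ) (v : Fin m → ℂ) :
    tabContent m n q v (T.swap h hstd).1 ⟨i + 1, h⟩ = tabContent m n q v T.1 ⟨i, by omega⟩ := by
  simp [swap, tabContent]

theorem isStdTab_swap_comp_swap (T : Tab m n S) {i : ℕ} (h : i + 1 < n)
    (hstd : IsStdTab m n (T.1 ∘ Equiv.swap ⟨i, by omega⟩ ⟨i + 1, h⟩)) :
    IsStdTab m n ((T.swap h hstd).1 ∘ Equiv.swap ⟨i, by omega⟩ ⟨i + 1, h⟩) := by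
  simpa [swap, Function.comp_def] using T.2.1

theorem swap_swap (T : Tab m n S) {i : ℕ} (h : i + 1 < n)
    (hstd : IsStdTab m n (T.1 ∘ Equiv.swap ⟨i, by omega⟩ ⟨i + 1, h⟩)) :
    (T.swap h hstd).swap h (T.isStdTab_swap_comp_swap h hstd) = T :=
  Subtype.ext <| funext fun x => by simp [swap]

def Adj (T U : Tab m n S) : Prop :=
  ∃ (i : ℕ) (h : i + 1 < n) (hstd : IsStdTab m n (T.1 ∘ Equiv.swap ⟨i, by omega⟩ ⟨i + 1, h⟩)),
    U = T.swap h hstd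

instance : Std.Symm (Adj : Tab m n S → Tab m n S → Prop) where
  symm := by
    rintro T _ ⟨i, h, hstd, rfl⟩
    exact ⟨i, h, T.isStdTab_swap_comp_swap h hstd, (T.swap_swap h hstd).symm⟩

theorem exists_reflTransGen_adj_strictMono (T : Tab m n S) :
    ∃ U : Tab m n S, StrictMono (nodeKey ∘ U.1) ∧ Relation.ReflTransGen Adj T U := by
  induction hw : tabWeight T.1 using Nat.strong_induction_on generalizing T with
  | _ w ih =>
  by_cases hsort : ∀ (i : ℕ) (h : i + 1 < n),
      nodeKey (T.1 ⟨i, by omega⟩) < nodeKey (T.1 ⟨i + 1, h⟩)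
  · exact ⟨T, Fin.strictMono_of_lt_add_one hsort, .refl⟩
  simp only [not_forall, not_lt] at hsort
  obtain ⟨i, h, hdesc⟩ := hsort
  have hdesc : nodeKey (T.1 ⟨i + 1, h⟩) < nodeKey (T.1 ⟨i, by omega⟩) :=
    hdesc.lt_of_ne fun he => by
      have := T.2.1.1 (nodeKey_injective he)
      simp [Fin.ext_iff] at this
  have hstd : IsStdTab m n (T.1 ∘ Equiv.swap ⟨i, by omega⟩ ⟨i + 1, h⟩) :=
    (T.2.1.comp_swap_iff rfl).2 fun ⟨hk, hle⟩ => (nodeKey_le_nodeKey hk hle).not_gt hdesc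
  have hlt : tabWeight (T.swap h hstd).1 < w := by
    have := tabWeight_comp_swap T.1 (i := ⟨i, by omega⟩) (i1 := ⟨i + 1, h⟩) rfl
    simp only [swap]
    omega
  obtain ⟨U, hU, hTU⟩ := ih _ hlt (T.swap h hstd) rfl
  exact ⟨U, hU, .head ⟨i, h, hstd, rfl⟩ hTU⟩

theorem eq_of_strictMono {T U : Tab m n S} (hT : StrictMono (nodeKey ∘ T.1))
    (hU : StrictMono (nodeKey ∘ U.1)) : T = U := by
  have hrange : Set.range (nodeKey ∘ T.1) = Set.range (nodeKey ∘ U.1) := by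
    rw [Set.range_comp, Set.range_comp, T.2.2, U.2.2]
  exact Subtype.ext <| nodeKey_injective.comp_left ((hT.range_inj hU).1 hrange)

theorem reflTransGen_adj (T U : Tab m n S) : Relation.ReflTransGen Adj T U := by
  obtain ⟨T₀, hT₀, hTT₀⟩ := T.exists_reflTransGen_adj_strictMono
  obtain ⟨U₀, hU₀, hUU₀⟩ := U.exists_reflTransGen_adj_strictMono
  rw [eq_of_strictMono hT₀ hU₀] at hTT₀
  exact hTT₀.trans (Std.Symm.symm _ _ hUU₀)

/-- Bubble the later of two entries of one diagram down through the entries of other diagrams. -/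
theorem exists_fst_eq_succ (T : Tab m n S) {a b : Fin n} (hab : a < b)
    (hk : (T.1 a).1 = (T.1 b).1) :
    ∃ (U : Tab m n S) (i : ℕ) (h : i + 1 < n), (U.1 ⟨i, by omega⟩).1 = (U.1 ⟨i + 1, h⟩).1 := by
  obtain ⟨g, hg⟩ : ∃ g, (b : ℕ) = a + g + 1 := ⟨b - a - 1, by rw [Fin.lt_def] at hab; omega⟩
  induction g generalizing T b with
  | zero => exact ⟨T, a, by omega, by simpa [← hg] using hk⟩
  | succ g ih =>
    have h : a + g + 1 + 1 < n := by omega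
    by_cases hk' : (T.1 ⟨a + g + 1, by omega⟩).1 = (T.1 ⟨a + g + 1 + 1, h⟩).1
    · exact ⟨T, _, h, hk'⟩
    have hstd : IsStdTab m n (T.1 ∘ Equiv.swap ⟨a + g + 1, by omega⟩ ⟨a + g + 1 + 1, h⟩) :=
      (T.2.1.comp_swap_iff rfl).2 fun hle => hk' hle.1
    refine ih (T.swap h hstd) (b := ⟨a + g + 1, by omega⟩) (by simp [Fin.lt_def]) ?_ rfl
    have ha : a ≠ ⟨a + g + 1, by omega⟩ := by simp only [ne_eq, Fin.ext_iff]; omega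
    have ha' : a ≠ ⟨a + g + 1 + 1, h⟩ := by simp only [ne_eq, Fin.ext_iff]; omega
    simp only [swap, Function.comp_apply, Equiv.swap_apply_left,
      Equiv.swap_apply_of_ne_of_ne ha ha']
    rw [hk, show b = ⟨a + g + 1 + 1, h⟩ from Fin.ext (by simp only; omega)]

end Tab

section Content

variable {m n : ℕ} {q : ℂ} {v : Fin m → ℂ}

noncomputable def nodeContent (q : ℂ) (v : Fin m → ℂ) (x : Fin m × ℕ × ℕ) : ℂ :=
  v x.1 * q ^ (2 * nodeDiag x)

theorem tabContent_eq_nodeContent (T : Fin n → Fin m × ℕ × ℕ) (i : Fin n) :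
    tabContent m n q v T i = nodeContent q v (T i) := rfl

theorem nodeContent_right (hq : q ≠ 0) (k : Fin m) (r s : ℕ) :
    nodeContent q v (k, r, s + 1) = q ^ 2 * nodeContent q v (k, r, s) := by
  simp only [nodeContent, nodeDiag]
  rw [show 2 * ((↑(s + 1) : ℤ) - r) = 2 * ((s : ℤ) - r) + 2 by push_cast; ring, zpow_add₀ hq]
  norm_cast
  ring

theorem nodeContent_below (hq : q ≠ 0) (k : Fin m) (r s : ℕ) :
    nodeContent q v (k, r, s) = q ^ 2 * nodeContent q v (k, r + 1, s) := by
  simp only [nodeContent, nodeDiag]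
  rw [show 2 * ((s : ℤ) - r) = 2 * ((s : ℤ) - ↑(r + 1)) + 2 by push_cast; ring, zpow_add₀ hq]
  norm_cast
  ring

theorem zpow_mul_nodeContent_eq_iff (hq : q ≠ 0) {e : ℤ} {a b : Fin m × ℕ × ℕ} :
    q ^ (2 * e) * nodeContent q v a = nodeContent q v b ↔
      q ^ (2 * (nodeDiag a + e - nodeDiag b)) * v a.1 = v b.1 := by
  simp only [nodeContent, mul_sub, mul_add, zpow_sub₀ hq, zpow_add₀ hq]
  rw [div_mul_eq_mul_div, div_eq_iff (zpow_ne_zero _ hq)]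
  constructor <;> intro h <;> linear_combination h

theorem SSParams.zpow_ne_one (hss : SSParams m n q v) (hq2 : q ^ 2 ≠ 1) {M : ℤ} (hM0 : M ≠ 0)
    (hMn : M.natAbs ≤ n) : q ^ (2 * M) ≠ 1 := by
  intro h
  have hN : (q ^ 2) ^ M.natAbs = 1 := by
    rw [zpow_mul] at h
    rcases Int.natAbs_eq M with hM | hM
    · rwa [hM, zpow_natCast] at h
    · rwa [hM, zpow_neg, inv_eq_one, zpow_natCast] at h
  obtain ⟨N, hNM⟩ : ∃ N, M.natAbs = N + 1 := ⟨M.natAbs - 1, by omega⟩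
  have hsum : ∑ k ∈ Finset.range (N + 1), (q ^ 2) ^ k = 0 := by
    rw [geom_sum_eq hq2, ← hNM, hN, sub_self, zero_div]
  rcases N.eq_zero_or_pos with rfl | hN0
  · simp at hsum
  · refine hss.1 N hN0 (by omega) ?_
    simpa [← pow_mul] using hsum

end Content

namespace IsStdTab

variable {m n : ℕ} {T : Fin n → Fin m × ℕ × ℕ} {q : ℂ} {v : Fin m → ℂ}

theorem fst_eq_of_zpow_mul_nodeContent_eq (hT : IsStdTab m n T) (hss : SSParams m n q v)
    (hq : q ≠ 0) {a b : Fin m × ℕ × ℕ} (ha : a ∈ Set.range T) (hb : b ∈ Set.range T) {e : ℤ}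
    (he : 0 ≤ e ∧ e ≤ 1) (h : q ^ (2 * e) * nodeContent q v a = nodeContent q v b) :
    a.1 = b.1 := by
  by_contra hk
  have hab := hT.col_add_row_lt ha hb
  have hba := hT.col_add_row_lt hb ha
  rw [if_neg hk] at hab
  rw [if_neg (Ne.symm hk)] at hba
  exact hss.2 _ _ hk _ (by simp only [nodeDiag]; omega) (by simp only [nodeDiag]; omega)
    ((zpow_mul_nodeContent_eq_iff hq).1 h)

theorem nodeDiag_add_eq_of_zpow_mul_nodeContent_eq (hT : IsStdTab m n T)
    (hss : SSParams m n q v) (hq : q ≠ 0) (hv : ∀ k, v k ≠ 0) (hq2 : q ^ 2 ≠ 1)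
    {a b : Fin m × ℕ × ℕ} (ha : a ∈ Set.range T) (hb : b ∈ Set.range T) (hk : a.1 = b.1) {e : ℤ}
    (he : 0 ≤ e ∧ e ≤ 1) (h : q ^ (2 * e) * nodeContent q v a = nodeContent q v b) :
    nodeDiag a + e = nodeDiag b := by
  by_contra hne
  have hab := hT.col_add_row_lt ha hb
  have hba := hT.col_add_row_lt hb ha
  rw [if_pos hk] at hab
  rw [if_pos hk.symm] at hba
  refine hss.zpow_ne_one hq2 (M := nodeDiag a + e - nodeDiag b) (by omega)
    (by simp only [nodeDiag]; omega) ?_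
  have h := (zpow_mul_nodeContent_eq_iff hq).1 h
  rwa [hk, mul_eq_right₀ (hv _)] at h

end IsStdTab

theorem sigN_mul_self {R : Type} [CommRing R] {m n : ℕ} {q qinv : R} {v : Fin m → R} {i : ℕ}
    (h : i + 1 < n) :
    sigN R m n q qinv v i * sigN R m n q qinv v i = (q - qinv) • sigN R m n q qinv v i + 1 := by
  have hrel := RingQuot.mkAlgHom_rel R
    (cycRel.quadratic (R := R) (m := m) (n := n) (q := q) (qinv := qinv) (v := v) ⟨i, by omega⟩)
  simpa [sigN, show i < n - 1 by omega, sigH] using hrel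

/-- The coefficient of `X` in `σ_i · X`, where `c = c(X|i)` and `c' = c(X|i+1)`. -/
noncomputable def sigDiagCoeff (q c c' : ℂ) : ℂ := -((q - q⁻¹) * c' / (c - c'))

/-- The coefficient of `X s_i` in `σ_i · X`, where `c = c(X|i)` and `c' = c(X|i+1)`. -/
noncomputable def sigSwapCoeff (q c c' : ℂ) : ℂ := (q * c' - q⁻¹ * c) / (c' - c)

theorem sigDiagCoeff_sq_mul {q : ℂ} (hq : q ≠ 0) {c c' : ℂ} (hc : c ≠ c')
    (h : c' = q ^ 2 * c ∨ c = q ^ 2 * c') : sigDiagCoeff q c c' ^ 2 * c = c' := by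
  have hc' : c - c' ≠ 0 := sub_ne_zero.2 hc
  unfold sigDiagCoeff
  rcases h with rfl | rfl
  · have : 1 - q ^ 2 ≠ 0 := fun h0 => hc' (by linear_combination c * h0)
    field_simp
    ring
  · have : q ^ 2 - 1 ≠ 0 := fun h0 => hc' (by linear_combination c' * h0)
    field_simp

namespace IsTabRep

variable {m n : ℕ} {q : ℂ} {v : Fin m → ℂ} {S : Set (Fin m × ℕ × ℕ)}
  {ρ : CycHecke ℂ m n q q⁻¹ v →ₐ[ℂ] Module.End ℂ (Tab m n S →₀ ℂ)}

open Classical in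
theorem sig_single (hρ : IsTabRep m n q v S ρ) (T : Tab m n S) {i : ℕ} (h : i + 1 < n) :
    ρ (sigN ℂ m n q q⁻¹ v i) (Finsupp.single T 1) =
      sigDiagCoeff q (tabContent m n q v T.1 ⟨i, by omega⟩) (tabContent m n q v T.1 ⟨i + 1, h⟩) •
          Finsupp.single T 1 +
        sigSwapCoeff q (tabContent m n q v T.1 ⟨i, by omega⟩)
            (tabContent m n q v T.1 ⟨i + 1, h⟩) •
          if hstd : IsStdTab m n (T.1 ∘ Equiv.swap ⟨i, by omega⟩ ⟨i + 1, h⟩) then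
            Finsupp.single (T.swap h hstd) 1 else 0 :=
  hρ.2 T i h

theorem sig_single_of_isStdTab (hρ : IsTabRep m n q v S ρ) (T : Tab m n S) {i : ℕ}
    (h : i + 1 < n) (hstd : IsStdTab m n (T.1 ∘ Equiv.swap ⟨i, by omega⟩ ⟨i + 1, h⟩)) :
    ρ (sigN ℂ m n q q⁻¹ v i) (Finsupp.single T 1) =
      sigDiagCoeff q (tabContent m n q v T.1 ⟨i, by omega⟩) (tabContent m n q v T.1 ⟨i + 1, h⟩) •
          Finsupp.single T 1 +
        sigSwapCoeff q (tabContent m n q v T.1 ⟨i, by omega⟩)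
            (tabContent m n q v T.1 ⟨i + 1, h⟩) • Finsupp.single (T.swap h hstd) 1 := by
  rw [hρ.sig_single T h, dif_pos hstd]

theorem sig_single_of_not_isStdTab (hρ : IsTabRep m n q v S ρ) (T : Tab m n S) {i : ℕ}
    (h : i + 1 < n) (hstd : ¬IsStdTab m n (T.1 ∘ Equiv.swap ⟨i, by omega⟩ ⟨i + 1, h⟩)) :
    ρ (sigN ℂ m n q q⁻¹ v i) (Finsupp.single T 1) =
      sigDiagCoeff q (tabContent m n q v T.1 ⟨i, by omega⟩) (tabContent m n q v T.1 ⟨i + 1, h⟩) •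
          Finsupp.single T 1 := by
  rw [hρ.sig_single T h, dif_neg hstd, smul_zero, add_zero]

/-- Were the two contents equal, the formula's divisions by zero would make `σ_i` kill `X`,
against `σ_i² = (q - q⁻¹) σ_i + 1`. -/
theorem tabContent_ne_succ (hρ : IsTabRep m n q v S ρ) (T : Tab m n S) {i : ℕ}
    (h : i + 1 < n) :
    tabContent m n q v T.1 ⟨i, by omega⟩ ≠ tabContent m n q v T.1 ⟨i + 1, h⟩ := by
  intro heq
  have hzero : ρ (sigN ℂ m n q q⁻¹ v i) (Finsupp.single T 1) = 0 := by
    rw [hρ.sig_single T h, heq, sigDiagCoeff, sigSwapCoeff]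
    simp
  have hrel := congrArg (fun a => ρ a (Finsupp.single T 1)) (sigN_mul_self (q := q) (qinv := q⁻¹)
    (v := v) h)
  simp only [map_mul, map_add, map_smul, map_one, Module.End.mul_apply, LinearMap.add_apply,
    LinearMap.smul_apply, Module.End.one_apply, hzero, map_zero, smul_zero, zero_add] at hrel
  exact one_ne_zero (Finsupp.single_eq_zero.1 hrel.symm)

theorem JM_single (hq : q ≠ 0) (hρ : IsTabRep m n q v S ρ) {i : ℕ} (hi : i < n)
    (T : Tab m n S) :
    ρ (JM ℂ m n q q⁻¹ v i) (Finsupp.single T 1) =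
      tabContent m n q v T.1 ⟨i, hi⟩ • Finsupp.single T 1 := by
  induction i generalizing T with
  | zero => exact hρ.1 T hi
  | succ i ih =>
    have hne := hρ.tabContent_ne_succ T hi
    rw [JM, map_mul, map_mul, Module.End.mul_apply, Module.End.mul_apply]
    by_cases hstd : IsStdTab m n (T.1 ∘ Equiv.swap ⟨i, by omega⟩ ⟨i + 1, hi⟩)
    · have hswap := hρ.sig_single_of_isStdTab (T.swap hi hstd) hi
        (T.isStdTab_swap_comp_swap hi hstd)
      rw [Tab.swap_swap, Tab.tabContent_swap_left, Tab.tabContent_swap_right] at hswap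
      have hT := hρ.sig_single_of_isStdTab T hi hstd
      rw [hT]
      simp only [map_add, map_smul, ih (by omega), hswap, hT, Tab.tabContent_swap_left]
      have h1 := sub_ne_zero.2 hne
      have h2 := sub_ne_zero.2 hne.symm
      simp only [sigDiagCoeff, sigSwapCoeff]
      match_scalars <;> field_simp <;> ring
    · rw [hρ.sig_single_of_not_isStdTab T hi hstd, map_smul, ih (by omega), map_smul, map_smul,
        hρ.sig_single_of_not_isStdTab T hi hstd, smul_smul, smul_smul, mul_right_comm, ← sq]
      congr 1
      refine sigDiagCoeff_sq_mul hq hne ?_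
      obtain ⟨hk, hle⟩ := not_not.1 ((T.2.1.comp_swap_iff rfl).not.1 hstd)
      simp only [tabContent_eq_nodeContent]
      rcases T.2.1.eq_right_or_below_of_le rfl hk hle with h | h <;> rw [h]
      · exact .inl (nodeContent_right hq _ _ _)
      · exact .inr (nodeContent_below hq _ _ _)

theorem sq_ne_one (hρ : IsTabRep m n q v S ρ) (T : Tab m n S) {a b : Fin m × ℕ × ℕ}
    (ha : a ∈ S) (hb : b ∈ S) (hab : a ≠ b) (hk : a.1 = b.1) : q ^ 2 ≠ 1 := by
  intro hq2
  rw [← T.2.2] at ha hb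
  obtain ⟨ia, rfl⟩ := ha
  obtain ⟨ib, rfl⟩ := hb
  have hne : ia ≠ ib := by rintro rfl; exact hab rfl
  obtain ⟨U, i, h, hU⟩ := hne.lt_or_gt.elim (fun h => T.exists_fst_eq_succ h hk)
    (fun h => T.exists_fst_eq_succ h hk.symm)
  apply hρ.tabContent_ne_succ U h
  simp [tabContent_eq_nodeContent, nodeContent, zpow_mul, hq2, hU]

theorem exists_tabContent_ne (hρ : IsTabRep m n q v S ρ) (hss : SSParams m n q v) (hq : q ≠ 0)
    (hv : ∀ k, v k ≠ 0) {T U : Tab m n S} (hTU : T ≠ U) :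
    ∃ i, tabContent m n q v T.1 i ≠ tabContent m n q v U.1 i := by
  by_contra! hc
  obtain ⟨i, hi, hmin⟩ := WellFounded.has_min wellFounded_lt {i | T.1 i ≠ U.1 i}
    (Function.ne_iff.1 fun h => hTU (Subtype.ext h))
  have hlt : ∀ j < i, T.1 j = U.1 j := fun j hj => not_not.1 fun h => hmin j h hj
  have ha : T.1 i ∈ Set.range T.1 := ⟨i, rfl⟩
  have hb : U.1 i ∈ Set.range T.1 := by rw [T.range_eq U]; exact ⟨i, rfl⟩
  have h : q ^ (2 * (0 : ℤ)) * nodeContent q v (T.1 i) = nodeContent q v (U.1 i) := by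
    rw [mul_zero, zpow_zero, one_mul]
    exact hc i
  have hk := T.2.1.fst_eq_of_zpow_mul_nodeContent_eq hss hq ha hb (by norm_num) h
  have hq2 := hρ.sq_ne_one T (T.apply_mem i) (U.apply_mem i) hi hk
  have hd := T.2.1.nodeDiag_add_eq_of_zpow_mul_nodeContent_eq hss hq hv hq2 ha hb hk
    (by norm_num) h
  exact hi (T.2.1.apply_eq_of_nodeDiag_eq U.2.1 hlt hk (by simpa using hd))

theorem sigSwapCoeff_ne_zero (hρ : IsTabRep m n q v S ρ) (hss : SSParams m n q v) (hq : q ≠ 0)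
    (hv : ∀ k, v k ≠ 0) (T : Tab m n S) {i : ℕ} (h : i + 1 < n)
    (hstd : IsStdTab m n (T.1 ∘ Equiv.swap ⟨i, by omega⟩ ⟨i + 1, h⟩)) :
    sigSwapCoeff q (tabContent m n q v T.1 ⟨i, by omega⟩) (tabContent m n q v T.1 ⟨i + 1, h⟩) ≠
      0 := by
  refine div_ne_zero (fun h0 => ?_) (sub_ne_zero.2 (hρ.tabContent_ne_succ T h).symm)
  have hc : q ^ (2 * (1 : ℤ)) * nodeContent q v (T.1 ⟨i + 1, h⟩) =
      nodeContent q v (T.1 ⟨i, by omega⟩) := by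
    rw [mul_one, zpow_ofNat]
    simp only [← tabContent_eq_nodeContent]
    field_simp at h0
    linear_combination h0
  have ha : T.1 ⟨i + 1, h⟩ ∈ Set.range T.1 := ⟨_, rfl⟩
  have hb : T.1 ⟨i, by omega⟩ ∈ Set.range T.1 := ⟨_, rfl⟩
  have hne : T.1 ⟨i + 1, h⟩ ≠ T.1 ⟨i, by omega⟩ := fun he => by
    simpa [Fin.ext_iff] using T.2.1.1 he
  have hk := T.2.1.fst_eq_of_zpow_mul_nodeContent_eq hss hq ha hb (by norm_num) hc
  have hq2 := hρ.sq_ne_one T (T.apply_mem _) (T.apply_mem _) hne hk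
  exact T.2.1.diag_succ_ne rfl hstd hk.symm
    (T.2.1.nodeDiag_add_eq_of_zpow_mul_nodeContent_eq hss hq hv hq2 ha hb hk (by norm_num) hc)

theorem single_swap_mem (hρ : IsTabRep m n q v S ρ) (hss : SSParams m n q v) (hq : q ≠ 0)
    (hv : ∀ k, v k ≠ 0) {W : Submodule ℂ (Tab m n S →₀ ℂ)}
    (hW : ∀ a : CycHecke ℂ m n q q⁻¹ v, ∀ x ∈ W, ρ a x ∈ W) (T : Tab m n S) {i : ℕ}
    (h : i + 1 < n) (hstd : IsStdTab m n (T.1 ∘ Equiv.swap ⟨i, by omega⟩ ⟨i + 1, h⟩))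
    (hT : Finsupp.single T 1 ∈ W) : Finsupp.single (T.swap h hstd) 1 ∈ W := by
  refine (W.smul_mem_iff (hρ.sigSwapCoeff_ne_zero hss hq hv T h hstd)).1 ?_
  have := sub_mem (hW (sigN ℂ m n q q⁻¹ v i) _ hT) (W.smul_mem
    (sigDiagCoeff q (tabContent m n q v T.1 ⟨i, by omega⟩) (tabContent m n q v T.1 ⟨i + 1, h⟩)) hT)
  rwa [hρ.sig_single_of_isStdTab T h hstd, add_sub_cancel_left] at this

theorem JM_apply (hq : q ≠ 0) (hρ : IsTabRep m n q v S ρ) {i : ℕ} (hi : i < n)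
    (x : Tab m n S →₀ ℂ) (U : Tab m n S) :
    ρ (JM ℂ m n q q⁻¹ v i) x U = tabContent m n q v U.1 ⟨i, hi⟩ * x U := by
  classical
  induction x using Finsupp.induction_linear with
  | zero => simp
  | add x y hx hy => simp [hx, hy, mul_add]
  | single T b =>
    rw [← mul_one b, ← smul_eq_mul, ← Finsupp.smul_single, map_smul, hρ.JM_single hq hi]
    by_cases hTU : T = U
    · subst hTU
      simp [mul_comm]
    · simp [hTU]

end IsTabRep

theorem tab_rep_irreducible_general (m n : ℕ)
    (q : ℂ) (hq : q ≠ 0) (v : Fin m → ℂ) (hv : ∀ k, v k ≠ 0) (hss : SSParams m n q v)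
    (S : Set (Fin m × ℕ × ℕ)) (hS : ∃ T, IsStdTab m n T ∧ Set.range T = S)
    (ρ : CycHecke ℂ m n q q⁻¹ v →ₐ[ℂ] Module.End ℂ (Tab m n S →₀ ℂ))
    (hρ : IsTabRep m n q v S ρ) :
    Nontrivial (Tab m n S →₀ ℂ) ∧
    ∀ W : Submodule ℂ (Tab m n S →₀ ℂ),
      (∀ a : CycHecke ℂ m n q q⁻¹ v, ∀ x ∈ W, ρ a x ∈ W) → W = ⊥ ∨ W = ⊤ := by
  obtain ⟨T₀, hT₀⟩ := hS
  refine ⟨⟨Finsupp.single ⟨T₀, hT₀⟩ 1, 0, Finsupp.single_ne_zero.2 one_ne_zero⟩,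
    fun W hW => or_iff_not_imp_left.2 fun hW0 => ?_⟩
  obtain ⟨T, hT⟩ := W.exists_single_one_mem_of_diagonal hW0
    (fun i : Fin n => ρ (JM ℂ m n q q⁻¹ v i)) (fun i U => tabContent m n q v U.1 i)
    (fun i => hρ.JM_apply hq i.2) (fun i => hW _) (fun _ _ => hρ.exists_tabContent_ne hss hq hv)
  have hall : ∀ U, Finsupp.single U 1 ∈ W := fun U => by
    induction Tab.reflTransGen_adj T U with
    | refl => exact hT
    | tail _ hadj ih =>
      obtain ⟨i, h, hstd, rfl⟩ := hadj
      exact hρ.single_swap_mem hss hq hv hW _ h hstd ih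
  rw [eq_top_iff, ← Finsupp.basisSingleOne.span_eq, Submodule.span_le]
  rintro _ ⟨U, rfl⟩
  simpa using hall U

/-- For every `m`-partition `λ` of length `n` (encoded by its
set `S` of nodes), the representation `V_λ` of `H(m,1,n)` is irreducible: the
space is nonzero and has no proper nonzero invariant subspace. -/
theorem tab_rep_irreducible (m n : ℕ) (hn : 0 < n)
    (q : ℂ) (hq : q ≠ 0) (v : Fin m → ℂ) (hv : ∀ k, v k ≠ 0) (hss : SSParams m n q v)
    (S : Set (Fin m × ℕ × ℕ)) (hS : ∃ T, IsStdTab m n T ∧ Set.range T = S)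
    (ρ : CycHecke ℂ m n q q⁻¹ v →ₐ[ℂ] Module.End ℂ (Tab m n S →₀ ℂ))
    (hρ : IsTabRep m n q v S ρ) :
    Nontrivial (Tab m n S →₀ ℂ) ∧
    ∀ W : Submodule ℂ (Tab m n S →₀ ℂ),
      (∀ a : CycHecke ℂ m n q q⁻¹ v, ∀ x ∈ W, ρ a x ∈ W) → W = ⊥ ∨ W = ⊤ :=
  tab_rep_irreducible_general m n q hq v hv hss S hS ρ hρ
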